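/- If q(x) ≥ 0 for a.e. x ∈ [−1,1], then every eigenvalue of the Dirichlet problem −y'' + q y = λ w y on [−1,1] is real; that is, the problem admits no non-real eigenvalues. -/

import Mathlib

open MeasureTheory Set Complex

noncomputable section

/-- `φ` (with derivative `φ'`) is an eigenfunction for the eigenvalue `lam` of the
Dirichlet problem `-y'' + q y = lam ⬝ r ⬝ y` on `[-1,1]`, `y(-1) = y(1) = 0`:
`φ` is differentiable on `[-1,1]` with derivative `φ'`, the derivative `φ'` is
absolutely continuous with `φ'(x) = φ'(-1) + ∫_{-1}^x (q φ - lam r φ)`,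
the boundary conditions hold, and `φ` is not identically zero on `[-1,1]`. -/
def IsEigenpair (q r : ℝ → ℝ) (lam : ℂ) (φ φ' : ℝ → ℂ) : Prop :=
  (∀ x ∈ Icc (-1:ℝ) 1, HasDerivAt φ (φ' x) x) ∧
  (∀ x ∈ Icc (-1:ℝ) 1,
    φ' x = φ' (-1) + ∫ t in (-1:ℝ)..x, ((q t : ℂ) * φ t - lam * (r t : ℂ) * φ t)) ∧
  φ (-1) = 0 ∧ φ 1 = 0 ∧ ∃ x ∈ Icc (-1:ℝ) 1, φ x ≠ 0

/-- `lam` is an eigenvalue of the Dirichlet problem `-y'' + q y = lam ⬝ r ⬝ y`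
on `[-1,1]`. -/
def IsEigenvalue (q r : ℝ → ℝ) (lam : ℂ) : Prop :=
  ∃ φ φ' : ℝ → ℂ, IsEigenpair q r lam φ φ'

/-!
Multiplying `-φ'' + q φ = λ w φ` by `conj φ` and integrating by parts, the Dirichlet conditions
kill the boundary terms and leave `∫ q |φ|² + ∫ |φ'|² = λ ∫ w |φ|²`, where all three integrals are
real. If `Im λ ≠ 0` this forces `∫ w |φ|² = 0` and then `∫ q |φ|² + ∫ |φ'|² = 0`; for `q ≥ 0` both
terms vanish, so `φ' = 0` a.e. and `φ`, which vanishes at `-1`, is identically zero.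
-/

section IntervalIntegral

variable {𝕜 : Type*} [RCLike 𝕜] {a b : ℝ}

theorem continuousOn_of_eq_add_primitive {E : Type*} [NormedAddCommGroup E] [NormedSpace ℝ E]
    (hab : a ≤ b) {v v' : ℝ → E} (hv' : IntervalIntegrable v' volume a b)
    (hv : ∀ x ∈ Icc a b, v x = v a + ∫ t in a..x, v' t) : ContinuousOn v (Icc a b) := by
  rw [← uIcc_of_le hab] at hv ⊢
  exact (continuousOn_const.add (intervalIntegral.continuousOn_primitive_interval
    ((intervalIntegrable_iff' (by simp)).1 hv'))).congr hv

theorem integral_primitive_mul_eq_integral_mul_primitive (hab : a ≤ b) {f g : ℝ → 𝕜}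
    (hf : IntervalIntegrable f volume a b) (hg : IntervalIntegrable g volume a b) :
    ∫ x in a..b, (∫ y in a..x, g y) * f x = ∫ y in a..b, g y * ∫ x in y..b, f x := by
  rw [intervalIntegrable_iff_integrableOn_Ioc_of_le hab] at hf hg
  set μ := volume.restrict (Ioc a b)
  set H : ℝ → ℝ → 𝕜 := fun x y => (Iio x).indicator g y * f x
  have hH : Integrable (Function.uncurry H) (μ.prod μ) := by
    have := (hf.mul_prod hg).indicator (measurableSet_lt measurable_snd measurable_fst)
    refine this.congr (.of_forall fun ⟨x, y⟩ => ?_)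
    by_cases hyx : y < x <;> simp [H, hyx, mul_comm]
  have inner_left : ∀ x ∈ Ioc a b, ∫ y, H x y ∂μ = (∫ y in a..x, g y) * f x := by
    intro x hx
    have hset : Iio x ∩ Ioc a b = Ioo a x := by
      ext y
      simp only [mem_inter_iff, mem_Iio, mem_Ioc, mem_Ioo]
      grind [hx.2]
    rw [integral_mul_const, integral_indicator measurableSet_Iio,
      Measure.restrict_restrict measurableSet_Iio, hset, intervalIntegral.integral_of_le hx.1.le,
      integral_Ioc_eq_integral_Ioo]
  have inner_right : ∀ y ∈ Ioc a b, ∫ x, H x y ∂μ = g y * ∫ x in y..b, f x := by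
    intro y hy
    have : (fun x => H x y) = (Ioi y).indicator fun x => g y * f x := by
      ext x
      by_cases hyx : y < x <;> simp [H, hyx]
    rw [this, integral_indicator measurableSet_Ioi, Measure.restrict_restrict measurableSet_Ioi,
      integral_const_mul, intervalIntegral.integral_of_le hy.2, inter_comm, Ioc_inter_Ioi,
      sup_eq_right.2 hy.1.le]
  rw [intervalIntegral.integral_of_le hab, intervalIntegral.integral_of_le hab,
    ← setIntegral_congr_fun measurableSet_Ioc inner_left,
    ← setIntegral_congr_fun measurableSet_Ioc inner_right]
  exact integral_integral_swap hH

-- `v` is merely a primitive of an integrable function, hence differentiable only a.e., which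
-- Mathlib's integration by parts does not cover; Fubini on the triangle `a < y < x < b` does.
theorem integral_mul_deriv_eq_deriv_mul_of_eq_add_primitive (hab : a ≤ b) {u u' v v' : ℝ → 𝕜}
    (hu : ∀ x ∈ Icc a b, HasDerivAt u (u' x) x) (hu' : IntervalIntegrable u' volume a b)
    (hv : ∀ x ∈ Icc a b, v x = v a + ∫ t in a..x, v' t) (hv' : IntervalIntegrable v' volume a b) :
    ∫ x in a..b, u x * v' x = u b * v b - u a * v a - ∫ x in a..b, u' x * v x := by
  have hv_cont : ContinuousOn v (uIcc a b) := by
    rw [uIcc_of_le hab]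
    exact continuousOn_of_eq_add_primitive hab hv' hv
  rw [← uIcc_of_le hab] at hu hv
  have hu_eq : ∀ x ∈ uIcc a b, u x = u a + ∫ t in a..x, u' t := by
    intro x hx
    have hax : uIcc a x ⊆ uIcc a b := uIcc_subset_uIcc_left hx
    rw [intervalIntegral.integral_eq_sub_of_hasDerivAt (fun t ht => hu t (hax ht))
      (hu'.mono_set hax), add_sub_cancel]
  have hv_eq : ∀ y ∈ uIcc a b, ∫ x in y..b, v' x = v b - v y := by
    intro y hy
    rw [hv b right_mem_uIcc, hv y hy, ← intervalIntegral.integral_interval_sub_left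
      hv' (hv'.mono_set (uIcc_subset_uIcc_left hy))]
    abel
  have hprim_cont : ContinuousOn (fun x => ∫ t in a..x, u' t) (uIcc a b) :=
    intervalIntegral.continuousOn_primitive_interval ((intervalIntegrable_iff' (by simp)).1 hu')
  calc ∫ x in a..b, u x * v' x
      = ∫ x in a..b, (u a * v' x + (∫ t in a..x, u' t) * v' x) := by
        refine intervalIntegral.integral_congr fun x hx => ?_
        simp only [hu_eq x hx, add_mul]
    _ = u a * (v b - v a) + ∫ y in a..b, u' y * (v b - v y) := by
        rw [intervalIntegral.integral_add (hv'.const_mul _) (hv'.continuousOn_mul hprim_cont),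
          intervalIntegral.integral_const_mul, integral_primitive_mul_eq_integral_mul_primitive hab
          hv' hu', hv_eq a left_mem_uIcc]
        exact congrArg _ (intervalIntegral.integral_congr fun y hy => by simp only [hv_eq y hy])
    _ = u b * v b - u a * v a - ∫ x in a..b, u' x * v x := by
        rw [show (fun y => u' y * (v b - v y)) = fun y => u' y * v b - u' y * v y by
            ext; ring,
          intervalIntegral.integral_sub (hu'.mul_const _) (hu'.mul_continuousOn hv_cont),
          intervalIntegral.integral_mul_const,
          intervalIntegral.integral_eq_sub_of_hasDerivAt hu hu']
        ring

theorem eq_of_hasDerivAt_of_deriv_ae_eq_zero {E : Type*} [NormedAddCommGroup E] [NormedSpace ℝ E]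
    [CompleteSpace E] {φ φ' : ℝ → E} (hφ : ∀ x ∈ Icc a b, HasDerivAt φ (φ' x) x)
    (hφ' : φ' =ᵐ[volume.restrict (Ioc a b)] 0) : ∀ x ∈ Icc a b, φ x = φ a := by
  intro x hx
  have hφ'_ax : φ' =ᵐ[volume.restrict (Ioc a x)] 0 :=
    ae_restrict_of_ae_restrict_of_subset (Ioc_subset_Ioc_right hx.2) hφ'
  have hint : IntervalIntegrable φ' volume a x :=
    (intervalIntegrable_iff_integrableOn_Ioc_of_le hx.1).2
      (integrable_zero _ _ _ |>.congr hφ'_ax.symm)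
  have hsub : uIcc a x ⊆ Icc a b := by
    rw [uIcc_of_le hx.1]
    exact Icc_subset_Icc_right hx.2
  rw [← sub_eq_zero, ← intervalIntegral.integral_eq_sub_of_hasDerivAt
    (fun t ht => hφ t (hsub ht)) hint, intervalIntegral.integral_of_le hx.1]
  exact integral_eq_zero_of_ae hφ'_ax

theorem ae_eq_zero_of_integral_norm_sq_eq_zero {E : Type*} [NormedAddCommGroup E]
    (hab : a ≤ b) {f : ℝ → E} (hf : ContinuousOn f (Icc a b))
    (h0 : ∫ x in a..b, ‖f x‖ ^ 2 = 0) : f =ᵐ[volume.restrict (Ioc a b)] 0 := by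
  have hsq := (intervalIntegral.integral_eq_zero_iff_of_nonneg_ae
    (.of_forall fun x => sq_nonneg ‖f x‖) ((hf.norm.pow 2).intervalIntegrable_of_Icc hab)).1 h0
  rw [Ioc_eq_empty_of_le hab, union_empty] at hsq
  filter_upwards [hsq] with x hx
  simpa using hx

theorem intervalIntegrable_ofReal_mul (hab : a ≤ b) {q : ℝ → ℝ} {φ : ℝ → ℂ}
    (hq : IntegrableOn q (Icc a b)) (hφ : ContinuousOn φ (Icc a b)) :
    IntervalIntegrable (fun t => (q t : ℂ) * φ t) volume a b := by
  rw [intervalIntegrable_iff_integrableOn_Icc_of_le hab]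
  exact IntegrableOn.mul_continuousOn hq.ofReal hφ isCompact_Icc

end IntervalIntegral

open scoped ComplexConjugate

namespace IsEigenpair

variable {q r : ℝ → ℝ} {lam : ℂ} {φ φ' : ℝ → ℂ}

theorem continuousOn (h : IsEigenpair q r lam φ φ') : ContinuousOn φ (Icc (-1) 1) :=
  fun x hx => (h.1 x hx).continuousAt.continuousWithinAt

theorem intervalIntegrable_integrand (h : IsEigenpair q r lam φ φ')
    (hq : IntegrableOn q (Icc (-1:ℝ) 1)) (hr : IntegrableOn r (Icc (-1:ℝ) 1)) :
    IntervalIntegrable (fun t => (q t : ℂ) * φ t - lam * (r t : ℂ) * φ t) volume (-1) 1 := by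
  simpa only [mul_assoc] using (intervalIntegrable_ofReal_mul (by norm_num) hq h.continuousOn).sub
    ((intervalIntegrable_ofReal_mul (by norm_num) hr h.continuousOn).const_mul lam)

theorem continuousOn_deriv (h : IsEigenpair q r lam φ φ') (hq : IntegrableOn q (Icc (-1:ℝ) 1))
    (hr : IntegrableOn r (Icc (-1:ℝ) 1)) : ContinuousOn φ' (Icc (-1) 1) :=
  continuousOn_of_eq_add_primitive (by norm_num) (h.intervalIntegrable_integrand hq hr) h.2.1

theorem integral_mul_norm_sq_add_integral_norm_deriv_sq (h : IsEigenpair q r lam φ φ')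
    (hq : IntegrableOn q (Icc (-1:ℝ) 1)) (hr : IntegrableOn r (Icc (-1:ℝ) 1)) :
    (((∫ x in (-1:ℝ)..1, q x * ‖φ x‖ ^ 2) + ∫ x in (-1:ℝ)..1, ‖φ' x‖ ^ 2 : ℝ) : ℂ) =
      lam * ((∫ x in (-1:ℝ)..1, r x * ‖φ x‖ ^ 2 : ℝ) : ℂ) := by
  have hnorm_cont : ContinuousOn (fun x => (‖φ x‖ : ℂ) ^ 2) (Icc (-1) 1) := by
    have := h.continuousOn
    fun_prop
  have hconj_deriv : IntervalIntegrable (fun x => conj (φ' x)) volume (-1) 1 :=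
    (h.continuousOn_deriv hq hr).star.intervalIntegrable_of_Icc (by norm_num)
  have ibp := integral_mul_deriv_eq_deriv_mul_of_eq_add_primitive (by norm_num)
    (fun x hx => (h.1 x hx).star) hconj_deriv h.2.1 (h.intervalIntegrable_integrand hq hr)
  simp only [star_def, h.2.2.1, h.2.2.2.1, map_zero, zero_mul, sub_zero, zero_sub, conj_mul']
    at ibp
  have hlhs : ∀ x, conj (φ x) * ((q x : ℂ) * φ x - lam * (r x : ℂ) * φ x) =
      (q x : ℂ) * (‖φ x‖ : ℂ) ^ 2 - lam * ((r x : ℂ) * (‖φ x‖ : ℂ) ^ 2) := by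
    intro x
    linear_combination ((q x : ℂ) - lam * r x) * conj_mul' (φ x)
  rw [intervalIntegral.integral_congr fun x _ => hlhs x, intervalIntegral.integral_sub
    (intervalIntegrable_ofReal_mul (by norm_num) hq hnorm_cont)
    ((intervalIntegrable_ofReal_mul (by norm_num) hr hnorm_cont).const_mul lam),
    intervalIntegral.integral_const_mul] at ibp
  simp only [ofReal_add, ← intervalIntegral.integral_ofReal, ofReal_mul, ofReal_pow]
  linear_combination ibp

end IsEigenpair

theorem eq_zero_of_ofReal_eq_mul_ofReal {s t : ℝ} {lam : ℂ} (h : (s : ℂ) = lam * t)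
    (hlam : lam.im ≠ 0) : s = 0 ∧ t = 0 := by
  have ht : t = 0 := by
    simpa [hlam] using congrArg Complex.im h
  refine ⟨?_, ht⟩
  simpa [ht] using h

theorem no_nonreal_eigenvalues_of_nonneg_q_general
    (q w : ℝ → ℝ)
    (hq : IntegrableOn q (Icc (-1:ℝ) 1))
    (hw : IntegrableOn w (Icc (-1:ℝ) 1))
    (hq0 : ∀ᵐ x ∂(volume.restrict (Icc (-1:ℝ) 1)), 0 ≤ q x) :
    ∀ lam : ℂ, IsEigenvalue q w lam → lam.im = 0 := by
  rintro lam ⟨φ, φ', h⟩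
  by_contra him
  obtain ⟨hAC, -⟩ := eq_zero_of_ofReal_eq_mul_ofReal
    (h.integral_mul_norm_sq_add_integral_norm_deriv_sq hq hw) him
  have hA : 0 ≤ ∫ x in (-1:ℝ)..1, q x * ‖φ x‖ ^ 2 :=
    intervalIntegral.integral_nonneg_of_ae_restrict (by norm_num) <| by
      filter_upwards [hq0] with x hx using mul_nonneg hx (by positivity)
  have hC : 0 ≤ ∫ x in (-1:ℝ)..1, ‖φ' x‖ ^ 2 :=
    intervalIntegral.integral_nonneg (by norm_num) fun x _ => by positivity
  have hφ'0 : φ' =ᵐ[volume.restrict (Ioc (-1) 1)] 0 :=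
    ae_eq_zero_of_integral_norm_sq_eq_zero (by norm_num) (h.continuousOn_deriv hq hw)
      (by linarith)
  obtain ⟨x₀, hx₀, hφx₀⟩ := h.2.2.2.2
  exact hφx₀ (by rw [eq_of_hasDerivAt_of_deriv_ae_eq_zero h.1 hφ'0 x₀ hx₀, h.2.2.1])

/-- if `q ≥ 0` a.e. on `[-1,1]`, every eigenvalue of the indefinite
problem is real. -/
theorem no_nonreal_eigenvalues_of_nonneg_q
    (q w : ℝ → ℝ)
    (hq : IntegrableOn q (Icc (-1:ℝ) 1))
    (hw : IntegrableOn w (Icc (-1:ℝ) 1))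
    (hw0 : ∀ᵐ x ∂(volume.restrict (Icc (-1:ℝ) 1)), w x ≠ 0)
    (hsign : 0 < volume {x ∈ Icc (-1:ℝ) 1 | 0 < w x} ∧
             0 < volume {x ∈ Icc (-1:ℝ) 1 | w x < 0})
    (hq0 : ∀ᵐ x ∂(volume.restrict (Icc (-1:ℝ) 1)), 0 ≤ q x) :
    ∀ lam : ℂ, IsEigenvalue q w lam → lam.im = 0 :=
  no_nonreal_eigenvalues_of_nonneg_q_general q w hq hw hq0
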